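/- arXiv:1707.05762 — 2 statements merged into one kernel-verified Lean document; each statement's English description precedes it below -/
import Mathlib

section
/- Let C([0,1]) denote the space of continuous maps from [0,1] to itself, equipped with the uniform (sup) metric, and let d be the Euclidean metric on [0,1]. Then the set A = { F ∈ C([0,1]) : mdim([0,1],d,F) = 1 } is dense in C([0,1]). -/
open Filter Set Metric Function
open scoped ENNReal NNReal

noncomputable section

universe u

/-- A pair `(X̂, Y)` of random variables on a probability space `(Ω, P)` satisfying
condition `(*)_{n,ε,μ}`: `X̂` has law `μ` and the expected average distortion
`E[(1/n) ∑_{k<n} d(T^k X̂, Y_k)]` is at most `ε`. -/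
structure DistortionPair {X : Type u} [MetricSpace X] [MeasurableSpace X]
    (T : X → X) (μ : MeasureTheory.Measure X) (ε : ℝ) (n : ℕ) where
  Ω : Type u
  [mΩ : MeasurableSpace Ω]
  P : MeasureTheory.Measure Ω
  probP : MeasureTheory.IsProbabilityMeasure P
  Xh : Ω → X
  Y : Ω → Fin n → X
  measXh : Measurable Xh
  measY : Measurable Y
  law : MeasureTheory.Measure.map Xh P = μ
  distortion : ∫ ω, (∑ k : Fin n, dist (T^[(k : ℕ)] (Xh ω)) (Y ω k)) / n ∂P ≤ ε

open MeasureTheory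

section Defs

variable {X : Type u} [MetricSpace X]

/-- The Bowen dynamical distance `d_n(x,y) = max_{0 ≤ k ≤ n-1} d(T^k x, T^k y)`. -/
def dynDist (T : X → X) (n : ℕ) (x y : X) : ℝ :=
  (((Finset.range n).sup (fun k => nndist (T^[k] x) (T^[k] y)) : ℝ≥0) : ℝ)

/-- The `(n,ε)`-dynamical ball around `x`. -/
def dynBall (T : X → X) (n : ℕ) (x : X) (ε : ℝ) : Set X :=
  {y | dynDist T n x y < ε}

/-- `N_d(n,ε)`: the maximal cardinality of an `(n,ε)`-separated subset of `X`. -/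
def dynSepNum (T : X → X) (n : ℕ) (ε : ℝ) : ℕ :=
  sSup {m | ∃ E : Finset X, (∀ x ∈ E, ∀ y ∈ E, x ≠ y → ε < dynDist T n x y) ∧ E.card = m}

/-- `S(X,d,ε) = limsup_n (1/n) log N_d(n,ε)`. -/
def dynS (T : X → X) (ε : ℝ) : ℝ≥0∞ :=
  Filter.atTop.limsup fun n : ℕ =>
    ENNReal.ofReal (Real.log (dynSepNum T n ε)) / (n : ℝ≥0∞)

/-- The upper metric mean dimension `mdim(X,d,T) = limsup_{ε → 0⁺} S(X,d,ε)/|log ε|`. -/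
def mdim (T : X → X) : ℝ≥0∞ :=
  Filter.limsup (fun ε : ℝ => dynS T ε / ENNReal.ofReal |Real.log ε|)
    (nhdsWithin 0 (Set.Ioi 0))

/-- The topological entropy `h_top(X,T) = lim_{ε → 0⁺} S(X,d,ε)`
(the limit exists by monotonicity, hence equals the `limsup`). -/
def htop (T : X → X) : ℝ≥0∞ :=
  Filter.limsup (fun ε : ℝ => dynS T ε) (nhdsWithin 0 (Set.Ioi 0))

/-- `N_μ(n,ε,δ)`: the minimal number of `(n,ε)`-dynamical balls needed to cover a set of
`μ`-measure strictly bigger than `1 - δ`. -/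
def dynCovNum [MeasurableSpace X] (T : X → X) (μ : Measure X) (n : ℕ) (ε δ : ℝ) : ℕ :=
  sInf {m | ∃ F : Finset X, F.card = m ∧
    ENNReal.ofReal (1 - δ) < μ (⋃ x ∈ F, dynBall T n x ε)}

/-- `h_μ(ε,T,δ) = limsup_n (1/n) log N_μ(n,ε,δ)`. -/
def dynH [MeasurableSpace X] (T : X → X) (μ : Measure X) (ε δ : ℝ) : ℝ≥0∞ :=
  Filter.atTop.limsup fun n : ℕ =>
    ENNReal.ofReal (Real.log (dynCovNum T μ n ε δ)) / (n : ℝ≥0∞)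

/-- The average dynamical distance `d̃_n(x,y) = (1/n) ∑_{k<n} d(T^k x, T^k y)`. -/
def avgDist (T : X → X) (n : ℕ) (x y : X) : ℝ :=
  (∑ k ∈ Finset.range n, dist (T^[k] x) (T^[k] y)) / n

/-- The `(n,ε)`-average dynamical ball around `x`. -/
def avgBall (T : X → X) (n : ℕ) (x : X) (ε : ℝ) : Set X :=
  {y | avgDist T n x y < ε}

/-- `Ñ_d(n,ε)`: the maximal cardinality of an `(n,ε)`-average separated subset of `X`. -/
def avgSepNum (T : X → X) (n : ℕ) (ε : ℝ) : ℕ :=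
  sSup {m | ∃ E : Finset X, (∀ x ∈ E, ∀ y ∈ E, x ≠ y → ε < avgDist T n x y) ∧ E.card = m}

/-- `S̃(X,d,ε) = limsup_n (1/n) log Ñ_d(n,ε)`. -/
def avgS (T : X → X) (ε : ℝ) : ℝ≥0∞ :=
  Filter.atTop.limsup fun n : ℕ =>
    ENNReal.ofReal (Real.log (avgSepNum T n ε)) / (n : ℝ≥0∞)

/-- `Ñ_μ(n,ε,δ)`: the minimal number of `(n,ε)`-average dynamical balls needed to cover a set
of `μ`-measure strictly bigger than `1 - δ`. -/
def avgCovNum [MeasurableSpace X] (T : X → X) (μ : Measure X) (n : ℕ) (ε δ : ℝ) : ℕ :=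
  sInf {m | ∃ F : Finset X, F.card = m ∧
    ENNReal.ofReal (1 - δ) < μ (⋃ x ∈ F, avgBall T n x ε)}

/-- `h̃_μ(ε,T,δ) = limsup_n (1/n) log Ñ_μ(n,ε,δ)`. -/
def avgH [MeasurableSpace X] (T : X → X) (μ : Measure X) (ε δ : ℝ) : ℝ≥0∞ :=
  Filter.atTop.limsup fun n : ℕ =>
    ENNReal.ofReal (Real.log (avgCovNum T μ n ε δ)) / (n : ℝ≥0∞)

/-- `h̃_μ(T,δ) = lim_{ε → 0⁺} h̃_μ(ε,T,δ)` (the limit exists by monotonicity, hence equals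
the `limsup`). -/
def avgHlim [MeasurableSpace X] (T : X → X) (μ : Measure X) (δ : ℝ) : ℝ≥0∞ :=
  Filter.limsup (fun ε : ℝ => avgH T μ ε δ) (nhdsWithin 0 (Set.Ioi 0))

end Defs

/-- `N(ε)`: the maximal cardinality of an `ε`-separated subset of `Y`. -/
def sepNum (Y : Type*) [MetricSpace Y] (ε : ℝ) : ℕ :=
  sSup {m | ∃ E : Finset Y, (∀ x ∈ E, ∀ y ∈ E, x ≠ y → ε < dist x y) ∧ E.card = m}

/-- The upper box (Minkowski) dimension `limsup_{ε → 0⁺} log N(ε) / |log ε|`. -/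
def upperBoxDim (Y : Type*) [MetricSpace Y] : ℝ≥0∞ :=
  Filter.limsup
    (fun ε : ℝ => ENNReal.ofReal (Real.log (sepNum Y ε)) / ENNReal.ofReal |Real.log ε|)
    (nhdsWithin 0 (Set.Ioi 0))

section Entropy

variable {X : Type u} [MeasurableSpace X]

/-- The entropy contribution `-μ(A) log μ(A)` of one cell (nonnegative when `μ(A) ≤ 1`). -/
def cellEnt (μ : Measure X) (A : Set X) : ℝ≥0∞ :=
  ENNReal.ofReal (-((μ A).toReal * Real.log (μ A).toReal))

/-- `H_μ(P ∨ T⁻¹P ∨ ⋯ ∨ T^{-(n-1)}P)` for the finite partition `P` indexed by `Fin m`. -/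
def refinedEnt (μ : Measure X) (T : X → X) {m : ℕ} (P : Fin m → Set X) (n : ℕ) : ℝ≥0∞ :=
  ∑ s : Fin n → Fin m, cellEnt μ (⋂ k : Fin n, T^[(k : ℕ)] ⁻¹' P (s k))

/-- `h_μ(P,T) = inf_{n ≥ 1} (1/n) H_μ(Pⁿ)`. -/
def entPart (μ : Measure X) (T : X → X) {m : ℕ} (P : Fin m → Set X) : ℝ≥0∞ :=
  ⨅ n : ℕ, refinedEnt μ T P (n + 1) / ((n + 1 : ℕ) : ℝ≥0∞)

/-- The measure-theoretic (Kolmogorov–Sinai) entropy `h_μ(T) = sup_P h_μ(P,T)`, the supremum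
over all finite measurable partitions of `X`. -/
def KSentropy (μ : Measure X) (T : X → X) : ℝ≥0∞ :=
  ⨆ (m : ℕ) (P : Fin m → Set X) (_ : ∀ i, MeasurableSet (P i))
    (_ : Pairwise (Function.onFun Disjoint P)) (_ : (⋃ i, P i) = Set.univ),
    entPart μ T P

end Entropy

section RD

open scoped Classical in
/-- The Kullback–Leibler divergence `∫ log (dp/dq) dp` (with value `∞` if `p` is not
absolutely continuous w.r.t. `q` or the integrand is not integrable). -/
def klDiv {α : Type*} [MeasurableSpace α] (p q : Measure α) : ℝ≥0∞ :=
  if p ≪ q ∧ Integrable (fun x => Real.log (p.rnDeriv q x).toReal) p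
  then ENNReal.ofReal (∫ x, Real.log (p.rnDeriv q x).toReal ∂p)
  else ⊤

/-- The mutual information `I(U,V)`: the Kullback–Leibler divergence of the joint law of
`(U,V)` with respect to the product of the laws of `U` and `V`. -/
def mutualInfo {Ω α β : Type*} [MeasurableSpace Ω] [MeasurableSpace α] [MeasurableSpace β]
    (P : Measure Ω) (U : Ω → α) (V : Ω → β) : ℝ≥0∞ :=
  klDiv (Measure.map (fun ω => (U ω, V ω)) P)
    ((Measure.map U P).prod (Measure.map V P))

/-- The rate distortion function `R_μ(ε) = inf (1/n) I(X̂,Y)`, the infimum over all `n ≥ 1`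
and all pairs `(X̂,Y)` satisfying condition `(*)_{n,ε,μ}`. -/
def rateDistortion {X : Type u} [MetricSpace X] [MeasurableSpace X]
    (T : X → X) (μ : Measure X) (ε : ℝ) : ℝ≥0∞ :=
  ⨅ (n : ℕ) (_ : 0 < n) (pair : DistortionPair T μ ε n),
    @mutualInfo pair.Ω X (Fin n → X) pair.mΩ _ _ pair.P pair.Xh pair.Y / (n : ℝ≥0∞)

end RD

end

/-!
A self-map of `[0,1]` has `mdim ≤ 1`: an `(n, ε)`-separated set is coded injectively by the
`ε`-cells visited by its orbits, so `N(n, ε) ≤ (⌊1/ε⌋ + 1)ⁿ`.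

Conversely, `gadget` is a continuous self-map of `[0,1]` which on the `j`-th window
`[1 - 2⁻ʲ, 1 - 2⁻ʲ⁻¹]` is an affine copy of the zigzag `t ↦ triangleWave (m t)` with `m = 2D + 1`
laps, `D = 2^(j²)`. On the points with even base-`m` digits the zigzag acts as the shift, which
gives `(D + 1)ⁿ` orbits separated at scale `εⱼ ≈ 2^(-j² - j)`, so `S(εⱼ) ≥ j² log 2 ≈ |log εⱼ|`.
Hence every map containing a rescaled copy of the gadget has `mdim ≥ 1`, and such a copy can be
glued into any `F` near a fixed point of `F`, at arbitrarily small uniform cost.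
-/

open Real unitInterval Topology

noncomputable section

/-- The 2-periodic even extension of the identity of `[0, 1]`. -/
def triangleWave (t : ℝ) : ℝ := arccos (cos (π * t)) / π

theorem continuous_triangleWave : Continuous triangleWave := by
  unfold triangleWave; fun_prop

theorem triangleWave_mem_Icc (t : ℝ) : triangleWave t ∈ I :=
  ⟨div_nonneg (arccos_nonneg _) pi_pos.le, (div_le_one pi_pos).2 (arccos_le_pi _)⟩

theorem triangleWave_of_mem_Icc {t : ℝ} (ht : t ∈ I) : triangleWave t = t := by
  rw [triangleWave, arccos_cos (by nlinarith [pi_pos, ht.1]) (by nlinarith [pi_pos, ht.2])]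
  field_simp

theorem triangleWave_zero : triangleWave 0 = 0 := triangleWave_of_mem_Icc zero_mem

theorem triangleWave_two_mul_int_add (k : ℤ) (t : ℝ) : triangleWave (2 * k + t) = triangleWave t := by
  rw [triangleWave, triangleWave, ← cos_add_int_mul_two_pi (π * t) k]
  ring_nf

theorem triangleWave_of_odd {m : ℕ} (hm : Odd m) : triangleWave m = 1 := by
  obtain ⟨k, rfl⟩ := hm
  have h := triangleWave_two_mul_int_add k 1
  push_cast at h ⊢
  rw [h, triangleWave_of_mem_Icc one_mem]

/-- `zigzagCode m [a₀, a₁, …] = ∑ aᵢ / m ^ (i + 1)`. -/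
def zigzagCode (m : ℕ) : List ℕ → ℝ
  | [] => 0
  | a :: l => (a + zigzagCode m l) / m

section ZigzagCode

variable {m : ℕ}

theorem zigzagCode_mem_Icc {l : List ℕ} (hl : ∀ a ∈ l, a < m) : zigzagCode m l ∈ I := by
  induction l with
  | nil => exact zero_mem
  | cons a l ih =>
    have ha : (a : ℝ) + 1 ≤ m := by exact_mod_cast hl a List.mem_cons_self
    have hy := ih fun b hb => hl b (List.mem_cons_of_mem a hb)
    exact div_mem (by linarith [hy.1]) (by linarith) (by linarith [hy.2])

theorem triangleWave_mul_zigzagCode_cons {a : ℕ} {l : List ℕ} (ha : Even a) (ham : a < m)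
    (hl : ∀ b ∈ l, b < m) : triangleWave (m * zigzagCode m (a :: l)) = zigzagCode m l := by
  obtain ⟨k, rfl⟩ := ha
  have hm : (m : ℝ) ≠ 0 := by exact_mod_cast (Nat.zero_lt_of_lt ham).ne'
  have h := triangleWave_two_mul_int_add k (zigzagCode m l)
  push_cast at h
  rw [zigzagCode, mul_div_cancel₀ _ hm, Nat.cast_add, ← two_mul, h,
    triangleWave_of_mem_Icc (zigzagCode_mem_Icc hl)]

theorem inv_le_abs_zigzagCode_cons_sub {a b : ℕ} {l l' : List ℕ} (ha : Even a) (hb : Even b)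
    (hab : a ≠ b) (hl : ∀ c ∈ l, c < m) (hl' : ∀ c ∈ l', c < m) (ham : a < m) :
    (m : ℝ)⁻¹ ≤ |zigzagCode m (a :: l) - zigzagCode m (b :: l')| := by
  have hm : (0 : ℝ) < m := by exact_mod_cast Nat.zero_lt_of_lt ham
  have hy := zigzagCode_mem_Icc hl
  have hy' := zigzagCode_mem_Icc hl'
  have hgap : (a : ℝ) + 2 ≤ b ∨ (b : ℝ) + 2 ≤ a := by
    obtain ⟨i, rfl⟩ := ha
    obtain ⟨j, rfl⟩ := hb
    have : i + i + 2 ≤ j + j ∨ j + j + 2 ≤ i + i := by omega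
    exact_mod_cast this
  rw [zigzagCode, zigzagCode, ← sub_div, abs_div, abs_of_pos hm, inv_eq_one_div]
  gcongr
  rw [le_abs']
  rcases hgap with h | h
  · left; linarith [hy.2, hy'.1]
  · right; linarith [hy.1, hy'.2]

end ZigzagCode

theorem iterate_zigzagCode {X : Type*} {T : X → X} {e : ℝ → X} {m : ℕ}
    (hT : ∀ t ∈ I, T (e t) = e (triangleWave (m * t))) {l : List ℕ}
    (hl : ∀ a ∈ l, Even a ∧ a < m) (k : ℕ) :
    T^[k] (e (zigzagCode m l)) = e (zigzagCode m (l.drop k)) := by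
  induction k generalizing l with
  | zero => rfl
  | succ k ih =>
    have hlm : ∀ a ∈ l, a < m := fun a ha => (hl a ha).2
    rw [iterate_succ_apply, hT _ (zigzagCode_mem_Icc hlm)]
    cases l with
    | nil => simpa [zigzagCode, triangleWave_zero] using ih hl
    | cons a l =>
      have hl' : ∀ b ∈ l, Even b ∧ b < m := fun b hb => hl b (List.mem_cons_of_mem a hb)
      rw [triangleWave_mul_zigzagCode_cons (hl a List.mem_cons_self).1
        (hl a List.mem_cons_self).2 fun b hb => (hl' b hb).2, ih hl', List.drop_succ_cons]

section Separated

variable {X : Type*} [MetricSpace X] {T : X → X} {n : ℕ} {ε : ℝ}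

def IsDynSeparated (T : X → X) (n : ℕ) (ε : ℝ) (E : Finset X) : Prop :=
  ∀ x ∈ E, ∀ y ∈ E, x ≠ y → ε < dynDist T n x y

theorem dist_iterate_le_dynDist {k : ℕ} (hk : k < n) (x y : X) :
    dist (T^[k] x) (T^[k] y) ≤ dynDist T n x y := by
  rw [dist_nndist]
  exact_mod_cast Finset.le_sup (f := fun k => nndist (T^[k] x) (T^[k] y)) (Finset.mem_range.2 hk)

theorem exists_lt_dist_iterate_of_lt_dynDist (hε : 0 ≤ ε) {x y : X}
    (h : ε < dynDist T n x y) : ∃ k < n, ε < dist (T^[k] x) (T^[k] y) := by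
  lift ε to ℝ≥0 using hε
  obtain ⟨k, hk, hlt⟩ := Finset.lt_sup_iff.1 (NNReal.coe_lt_coe.1 h)
  exact ⟨k, Finset.mem_range.1 hk, hlt⟩

theorem IsDynSeparated.card_le_pow {K : ℕ} {E : Finset X} (hE : IsDynSeparated T n ε E)
    (hε : 0 ≤ ε) (c : X → Fin K) (hc : ∀ x y, c x = c y → dist x y ≤ ε) : E.card ≤ K ^ n := by
  classical
  have hinj : Set.InjOn (fun x (k : Fin n) => c (T^[k] x)) E := by
    intro x hx y hy hxy
    by_contra hne
    obtain ⟨k, hk, hlt⟩ := exists_lt_dist_iterate_of_lt_dynDist hε (hE x hx y hy hne)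
    exact (hc _ _ (congrFun hxy ⟨k, hk⟩)).not_gt hlt
  simpa using Finset.card_le_card_of_injOn _ (fun _ _ => Finset.mem_coe.2 (Finset.mem_univ _)) hinj

theorem exists_isDynSeparated_of_zigzag {e : ℝ → X} {ℓ : ℝ} {D : ℕ} (hℓ : 0 < ℓ)
    (he : ∀ t ∈ I, ∀ t' ∈ I, ℓ * |t - t'| ≤ dist (e t) (e t'))
    (hT : ∀ t ∈ I, T (e t) = e (triangleWave ((2 * D + 1 : ℕ) * t)))
    (hε : ε < ℓ / (2 * D + 1 : ℕ)) (n : ℕ) :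
    ∃ E : Finset X, IsDynSeparated T n ε E ∧ E.card = (D + 1) ^ n := by
  classical
  set m := 2 * D + 1
  let digits (s : Fin n → Fin (D + 1)) : List ℕ := List.ofFn fun i => 2 * (s i : ℕ)
  have hdigits (s : Fin n → Fin (D + 1)) : ∀ a ∈ digits s, Even a ∧ a < m := by
    intro a ha
    obtain ⟨i, rfl⟩ := List.mem_ofFn.1 ha
    exact ⟨even_two_mul _, by omega⟩
  have hdrop (s : Fin n → Fin (D + 1)) (i : Fin n) :
      (digits s).drop i = 2 * (s i : ℕ) :: (digits s).drop (i + 1) := by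
    rw [List.drop_eq_getElem_cons (by simp [digits]), List.getElem_ofFn]
  let f s := e (zigzagCode m (digits s))
  have hfar (s s' : Fin n → Fin (D + 1)) (hss' : s ≠ s') :
      ∃ i < n, ℓ / m ≤ dist (T^[i] (f s)) (T^[i] (f s')) := by
    obtain ⟨i, hi⟩ := Function.ne_iff.1 hss'
    refine ⟨i, i.2, ?_⟩
    have htail (s : Fin n → Fin (D + 1)) : ∀ a ∈ 2 * (s i : ℕ) :: (digits s).drop (i + 1), a < m :=
      fun a ha => (hdigits s a (List.mem_of_mem_drop (hdrop s i ▸ ha))).2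
    rw [iterate_zigzagCode hT (hdigits s), iterate_zigzagCode hT (hdigits s'), hdrop, hdrop,
      div_eq_mul_inv]
    refine le_trans ?_ (he _ (zigzagCode_mem_Icc (htail s)) _ (zigzagCode_mem_Icc (htail s')))
    gcongr
    exact inv_le_abs_zigzagCode_cons_sub (even_two_mul _) (even_two_mul _)
      (fun h => hi (Fin.ext (by omega))) (fun a ha => htail s a (List.mem_cons_of_mem _ ha))
      (fun a ha => htail s' a (List.mem_cons_of_mem _ ha)) (by omega)
  have hinj : Function.Injective f := by
    intro s s' h
    by_contra hne
    obtain ⟨i, -, hi⟩ := hfar s s' hne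
    rw [h, dist_self] at hi
    exact (div_pos hℓ (by positivity)).not_ge hi
  refine ⟨Finset.univ.image f, ?_, by simp [Finset.card_image_of_injective _ hinj]⟩
  simp only [IsDynSeparated, Finset.mem_image, Finset.mem_univ, true_and]
  rintro _ ⟨s, rfl⟩ _ ⟨s', rfl⟩ hne
  obtain ⟨i, hi, hfar⟩ := hfar s s' fun h => hne (h ▸ rfl)
  exact hε.trans_le (hfar.trans (dist_iterate_le_dynDist hi _ _))

theorem le_mdim_of_tendsto {ε : ℕ → ℝ} {u : ℕ → ℝ≥0∞} {a : ℝ≥0∞}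
    (hε : Tendsto ε atTop (𝓝[>] 0)) (hu : Tendsto u atTop (𝓝 a))
    (h : ∀ j, u j ≤ dynS T (ε j) / ENNReal.ofReal |log (ε j)|) : a ≤ mdim T :=
  calc a = limsup u atTop := hu.limsup_eq.symm
    _ ≤ limsup ((fun ε => dynS T ε / ENNReal.ofReal |log ε|) ∘ ε) atTop :=
      limsup_le_limsup (Eventually.of_forall h)
    _ ≤ mdim T := by
      rw [limsup_comp]
      exact limsup_le_limsup_of_le hε

end Separated

theorem log_natCast_le_log_natCast {a b : ℕ} (h : a ≤ b) : log a ≤ log b := by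
  rcases Nat.eq_zero_or_pos a with rfl | ha
  · simpa using log_natCast_nonneg b
  · exact log_le_log (by exact_mod_cast ha) (by exact_mod_cast h)

theorem limsup_log_div_le_of_le_pow {a : ℕ → ℕ} {K : ℕ} (h : ∀ n, a n ≤ K ^ n) :
    limsup (fun n : ℕ => ENNReal.ofReal (log (a n)) / n) atTop ≤ ENNReal.ofReal (log K) := by
  refine limsup_le_of_le (by isBoundedDefault) (Eventually.of_forall fun n => ?_)
  refine ENNReal.div_le_of_le_mul ?_
  rw [← ENNReal.ofReal_natCast, ← ENNReal.ofReal_mul (log_natCast_nonneg K), mul_comm, ← log_pow,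
    ← Nat.cast_pow]
  exact ENNReal.ofReal_le_ofReal (log_natCast_le_log_natCast (h n))

theorem le_limsup_log_div_of_pow_le {a : ℕ → ℕ} {K : ℕ} (h : ∀ n, K ^ n ≤ a n) :
    ENNReal.ofReal (log K) ≤ limsup (fun n : ℕ => ENNReal.ofReal (log (a n)) / n) atTop := by
  refine le_limsup_of_frequently_le ((eventually_ge_atTop 1).mono fun n hn => ?_).frequently
    (by isBoundedDefault)
  rw [ENNReal.le_div_iff_mul_le (Or.inl (Nat.cast_ne_zero.2 (by omega)))
    (Or.inl (ENNReal.natCast_ne_top n)), ← ENNReal.ofReal_natCast,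
    ← ENNReal.ofReal_mul (log_natCast_nonneg K), mul_comm, ← log_pow, ← Nat.cast_pow]
  exact ENNReal.ofReal_le_ofReal (log_natCast_le_log_natCast (h n))

section UnitInterval

variable {T : I → I} {n : ℕ} {ε : ℝ}

theorem IsDynSeparated.card_le_floor_pow {E : Finset I} (hE : IsDynSeparated T n ε E)
    (hε : 0 < ε) : E.card ≤ (⌊1 / ε⌋₊ + 1) ^ n := by
  refine hE.card_le_pow hε.le (fun x => ⟨⌊(x : ℝ) / ε⌋₊, Nat.lt_succ_of_le
    (Nat.floor_le_floor (by gcongr; exact le_one x))⟩) fun x y hxy => ?_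
  have h : ((⌊(x : ℝ) / ε⌋ : ℤ) : ℝ) = ⌊(y : ℝ) / ε⌋ := by
    rw [← natCast_floor_eq_intCast_floor (div_nonneg (nonneg x) hε.le),
      ← natCast_floor_eq_intCast_floor (div_nonneg (nonneg y) hε.le)]
    exact_mod_cast congrArg Fin.val hxy
  have := Int.abs_sub_lt_one_of_floor_eq_floor (Int.cast_inj.1 h)
  rw [← sub_div, abs_div, abs_of_pos hε, div_lt_one hε] at this
  rw [Subtype.dist_eq, Real.dist_eq]
  exact this.le

theorem dynSepNum_le (T : I → I) (n : ℕ) (hε : 0 < ε) :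
    dynSepNum T n ε ≤ (⌊1 / ε⌋₊ + 1) ^ n :=
  csSup_le ⟨0, ∅, by simp, rfl⟩ fun _ ⟨_, hE, hcard⟩ => hcard ▸ IsDynSeparated.card_le_floor_pow hE hε

theorem IsDynSeparated.card_le_dynSepNum {E : Finset I} (hE : IsDynSeparated T n ε E)
    (hε : 0 < ε) : E.card ≤ dynSepNum T n ε :=
  le_csSup ⟨_, fun _ ⟨_, hE', hcard⟩ => hcard ▸ IsDynSeparated.card_le_floor_pow hE' hε⟩ ⟨E, hE, rfl⟩

theorem log_le_dynS {K : ℕ} (hε : 0 < ε)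
    (h : ∀ n, ∃ E, IsDynSeparated T n ε E ∧ E.card = K ^ n) :
    ENNReal.ofReal (log K) ≤ dynS T ε :=
  le_limsup_log_div_of_pow_le fun n =>
    let ⟨_, hE, hcard⟩ := h n
    hcard ▸ hE.card_le_dynSepNum hε

theorem dynS_le_log_floor (T : I → I) (hε : 0 < ε) :
    dynS T ε ≤ ENNReal.ofReal (log (⌊1 / ε⌋₊ + 1 : ℕ)) :=
  limsup_log_div_le_of_le_pow fun n => dynSepNum_le T n hε

theorem mdim_le_one (T : I → I) : mdim T ≤ 1 := by
  have hlim : Tendsto (fun ε : ℝ => ENNReal.ofReal (1 + log 2 / -log ε)) (𝓝[>] 0) (𝓝 1) := by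
    have : Tendsto (fun ε : ℝ => log 2 / -log ε) (𝓝[>] 0) (𝓝 0) :=
      tendsto_const_nhds.div_atTop (tendsto_neg_atBot_atTop.comp tendsto_log_nhdsGT_zero)
    simpa using ENNReal.tendsto_ofReal (this.const_add 1)
  refine (limsup_le_limsup ?_).trans_eq hlim.limsup_eq
  filter_upwards [Ioo_mem_nhdsGT one_pos] with ε ⟨hε0, hε1⟩
  have hlog : 0 < -log ε := neg_pos.2 (log_neg hε0 hε1)
  have hfloor : ((⌊1 / ε⌋₊ + 1 : ℕ) : ℝ) ≤ 2 / ε := by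
    have h1 : 1 ≤ 1 / ε := by rw [le_div_iff₀ hε0]; linarith
    have h2 : 2 / ε = 1 / ε + 1 / ε := by ring
    push_cast
    linarith [Nat.floor_le (one_div_pos.2 hε0).le]
  calc dynS T ε / ENNReal.ofReal |log ε|
      ≤ ENNReal.ofReal (log (2 / ε)) / ENNReal.ofReal (-log ε) := by
        rw [abs_of_neg (neg_pos.1 hlog)]
        gcongr
        exact (dynS_le_log_floor T hε0).trans
          (ENNReal.ofReal_le_ofReal (log_le_log (by positivity) hfloor))
    _ = ENNReal.ofReal (1 + log 2 / -log ε) := by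
        rw [← ENNReal.ofReal_div_of_pos hlog, log_div two_ne_zero hε0.ne']
        congr 1
        field_simp [(neg_pos.1 hlog).ne]
        ring

end UnitInterval

def windowStart (j : ℕ) : ℝ := 1 - 2⁻¹ ^ j

def windowLength (j : ℕ) : ℝ := 2⁻¹ ^ (j + 1)

def gadgetLaps (j : ℕ) : ℕ := 2 * 2 ^ (j ^ 2) + 1

def gadgetBump (j : ℕ) (x : ℝ) : ℝ :=
  let t : ℝ := projIcc 0 1 zero_le_one ((x - windowStart j) / windowLength j)
  windowLength j * (triangleWave (gadgetLaps j * t) - t)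

def gadget (x : ℝ) : ℝ := x + ∑' j, gadgetBump j x

section Gadget

variable {j : ℕ} {x : ℝ}

theorem windowLength_pos (j : ℕ) : 0 < windowLength j := by
  unfold windowLength; positivity

theorem windowStart_succ (j : ℕ) : windowStart (j + 1) = windowStart j + windowLength j := by
  unfold windowStart windowLength; ring

theorem windowStart_mono : Monotone windowStart :=
  monotone_nat_of_le_succ fun j => by
    rw [windowStart_succ]; exact le_add_of_nonneg_right (windowLength_pos j).le

theorem windowStart_add_mul_mem_Icc (j : ℕ) {t : ℝ} (ht : t ∈ I) :
    windowStart j + windowLength j * t ∈ Icc (windowStart j) (windowStart (j + 1)) := by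
  rw [windowStart_succ]
  constructor <;> nlinarith [windowLength_pos j, ht.1, ht.2]

theorem windowStart_mem_Icc (j : ℕ) : windowStart j ∈ I :=
  ⟨sub_nonneg.2 (pow_le_one₀ (by norm_num) (by norm_num)), sub_le_self _ (by positivity)⟩

theorem Icc_windowStart_subset_Icc (j : ℕ) : Icc (windowStart j) (windowStart (j + 1)) ⊆ I :=
  Icc_subset_Icc (windowStart_mem_Icc j).1 (windowStart_mem_Icc (j + 1)).2

theorem gadgetBump_of_le_windowStart (h : x ≤ windowStart j) : gadgetBump j x = 0 := by
  rw [gadgetBump, projIcc_of_le_left _ (div_nonpos_of_nonpos_of_nonneg (by linarith)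
    (windowLength_pos j).le)]
  simp [triangleWave_zero]

theorem gadgetBump_of_windowStart_succ_le (h : windowStart (j + 1) ≤ x) :
    gadgetBump j x = 0 := by
  rw [windowStart_succ] at h
  rw [gadgetBump, projIcc_of_right_le _ ((le_div_iff₀ (windowLength_pos j)).2 (by linarith))]
  simp [triangleWave_of_odd (show Odd (gadgetLaps j) from odd_two_mul_add_one _)]

theorem abs_gadgetBump_le (j : ℕ) (x : ℝ) : |gadgetBump j x| ≤ windowLength j := by
  have ht := (projIcc (0:ℝ) 1 zero_le_one ((x - windowStart j) / windowLength j)).2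
  have hw := triangleWave_mem_Icc (gadgetLaps j *
    projIcc (0:ℝ) 1 zero_le_one ((x - windowStart j) / windowLength j))
  rw [gadgetBump, abs_mul, abs_of_pos (windowLength_pos j)]
  exact mul_le_of_le_one_right (windowLength_pos j).le
    (abs_le.2 ⟨by linarith [hw.1, ht.2], by linarith [hw.2, ht.1]⟩)

theorem continuous_gadget : Continuous gadget := by
  refine continuous_id.add (continuous_tsum (fun j => ?_) ?_ fun j x => abs_gadgetBump_le j x)
  · unfold gadgetBump
    have := continuous_triangleWave
    fun_prop
  · exact (summable_nat_add_iff 1).2 (summable_geometric_of_lt_one (by norm_num) (by norm_num))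

theorem gadget_windowStart_add_mul {t : ℝ} (ht : t ∈ I) :
    gadget (windowStart j + windowLength j * t) =
      windowStart j + windowLength j * triangleWave (gadgetLaps j * t) := by
  have hx := windowStart_add_mul_mem_Icc j ht
  have hsingle : ∑' i, gadgetBump i (windowStart j + windowLength j * t) =
      gadgetBump j (windowStart j + windowLength j * t) := by
    refine tsum_eq_single j fun i hij => ?_
    rcases lt_or_gt_of_ne hij with h | h
    · exact gadgetBump_of_windowStart_succ_le ((windowStart_mono h).trans hx.1)
    · exact gadgetBump_of_le_windowStart (hx.2.trans (windowStart_mono h))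
  rw [gadget, hsingle, gadgetBump, add_sub_cancel_left, mul_div_cancel_left₀ _
    (windowLength_pos j).ne', projIcc_of_mem _ ht]
  ring

theorem gadget_one : gadget 1 = 1 := by
  have h (j : ℕ) : gadgetBump j 1 = 0 :=
    gadgetBump_of_windowStart_succ_le (windowStart_mem_Icc (j + 1)).2
  simp [gadget, h]

theorem gadget_mem_Icc (hx : x ∈ I) : gadget x ∈ I := by
  rcases hx.2.eq_or_lt with rfl | hx1
  · rw [gadget_one]; exact one_mem
  obtain ⟨j, hj1, hj2⟩ := exists_nat_pow_near_of_lt_one (sub_pos.2 hx1) (by linarith [hx.1])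
    (by norm_num : (0:ℝ) < 2⁻¹) (by norm_num)
  have ht : (x - windowStart j) / windowLength j ∈ I := by
    have := windowStart_succ j
    unfold windowStart at this
    exact div_mem (by unfold windowStart; linarith) (windowLength_pos j).le
      (by unfold windowStart; linarith)
  have hx' : x = windowStart j + windowLength j * ((x - windowStart j) / windowLength j) := by
    field_simp [(windowLength_pos j).ne']; ring
  rw [hx', gadget_windowStart_add_mul ht]
  exact Icc_windowStart_subset_Icc j (windowStart_add_mul_mem_Icc j (triangleWave_mem_Icc _))

end Gadget

theorem tendsto_sq_div_sq_add_add (b : ℝ) :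
    Tendsto (fun j : ℕ => (j : ℝ) ^ 2 / (j ^ 2 + j + b)) atTop (𝓝 1) := by
  have h := tendsto_one_div_atTop_nhds_zero_nat (𝕜 := ℝ)
  have : Tendsto (fun j : ℕ => 1 / (1 + 1 / (j : ℝ) + b * (1 / j) ^ 2)) atTop
      (𝓝 (1 / (1 + 0 + b * 0 ^ 2))) :=
    tendsto_const_nhds.div ((tendsto_const_nhds.add h).add ((h.pow 2).const_mul b)) (by simp)
  refine (by simpa using this : Tendsto _ atTop (𝓝 (1 : ℝ))).congr' ?_
  filter_upwards [eventually_ge_atTop 1] with j hj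
  have : (j : ℝ) ≠ 0 := by positivity
  field_simp

def IsGadgetOn (G : I → I) (c ρ : ℝ) : Prop :=
  ∀ x : I, (x : ℝ) ∈ Icc c (c + ρ) → (G x : ℝ) = c + ρ * gadget ((x - c) / ρ)

section LowerBound

variable {G : I → I} {c ρ : ℝ}

theorem exists_isDynSeparated_of_isGadgetOn (hc : 0 ≤ c) (hρ : 0 < ρ) (hcρ : c + ρ ≤ 1)
    (hG : IsGadgetOn G c ρ) (j n : ℕ) :
    ∃ E, IsDynSeparated G n (ρ * 2⁻¹ ^ (j ^ 2 + j + 3)) E ∧ E.card = (2 ^ j ^ 2 + 1) ^ n := by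
  have hmem {t : ℝ} (ht : t ∈ I) :
      c + ρ * (windowStart j + windowLength j * t) ∈ Icc c (c + ρ) := by
    have := Icc_windowStart_subset_Icc j (windowStart_add_mul_mem_Icc j ht)
    constructor <;> nlinarith [this.1, this.2]
  have hsub : Icc c (c + ρ) ⊆ I := Icc_subset_Icc hc hcρ
  let e (t : ℝ) : I := projIcc 0 1 zero_le_one (c + ρ * (windowStart j + windowLength j * t))
  have he {t : ℝ} (ht : t ∈ I) : (e t : ℝ) = c + ρ * (windowStart j + windowLength j * t) := by
    simp only [e, projIcc_of_mem _ (hsub (hmem ht))]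
  have hℓ : 0 < ρ * windowLength j := mul_pos hρ (windowLength_pos j)
  refine exists_isDynSeparated_of_zigzag (e := e) hℓ (fun t ht t' ht' => ?_) (fun t ht => ?_) ?_ n
  · rw [Subtype.dist_eq, he ht, he ht', Real.dist_eq, ← abs_of_pos hℓ, ← abs_mul]
    exact le_of_eq (congrArg _ (by ring))
  · apply Subtype.ext
    rw [hG _ (he ht ▸ hmem ht), he ht, he (triangleWave_mem_Icc _), add_sub_cancel_left,
      mul_div_cancel_left₀ _ hρ.ne', gadget_windowStart_add_mul ht, gadgetLaps]
  · have h1 : (1 : ℝ) ≤ 2 ^ j ^ 2 := one_le_pow₀ one_le_two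
    calc ρ * 2⁻¹ ^ (j ^ 2 + j + 3) = ρ * windowLength j / 2 ^ (j ^ 2 + 2) := by
          rw [windowLength, div_eq_mul_inv, ← inv_pow, mul_assoc, ← pow_add]
          ring_nf
      _ < ρ * windowLength j / (2 * 2 ^ j ^ 2 + 1 : ℕ) := by
          refine div_lt_div_of_pos_left hℓ (by positivity) ?_
          push_cast
          rw [pow_add]
          linarith

theorem one_le_mdim_of_isGadgetOn (hc : 0 ≤ c) (hρ : 0 < ρ) (hcρ : c + ρ ≤ 1)
    (hG : IsGadgetOn G c ρ) : 1 ≤ mdim G := by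
  have hlog2 : 0 < log 2 := log_pos one_lt_two
  have hlogρ : log ρ ≤ 0 := log_nonpos hρ.le (by linarith)
  set ε : ℕ → ℝ := fun j => ρ * 2⁻¹ ^ (j ^ 2 + j + 3)
  have hlogε (j : ℕ) : |log (ε j)| = ((j : ℝ) ^ 2 + j + 3) * log 2 - log ρ := by
    have : log (ε j) = log ρ - ((j : ℝ) ^ 2 + j + 3) * log 2 := by
      simp only [ε]
      rw [log_mul hρ.ne' (by positivity), log_pow, log_inv]
      push_cast; ring
    rw [this, abs_of_neg (by nlinarith [sq_nonneg (j : ℝ), (Nat.cast_nonneg j : (0:ℝ) ≤ j)])]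
    ring
  have hε : Tendsto ε atTop (𝓝[>] 0) := by
    refine tendsto_nhdsWithin_iff.2 ⟨?_, Eventually.of_forall fun j => mem_Ioi.2 (by positivity)⟩
    have hN : Tendsto (fun j : ℕ => j ^ 2 + j + 3) atTop atTop :=
      tendsto_atTop_mono (fun j => by simp only [id]; linarith [Nat.zero_le (j ^ 2)]) tendsto_id
    simpa using ((tendsto_pow_atTop_nhds_zero_of_lt_one (by norm_num) (by norm_num)).comp
      hN).const_mul ρ
  refine le_mdim_of_tendsto hε
    (by simpa using ENNReal.tendsto_ofReal (tendsto_sq_div_sq_add_add (3 - log ρ / log 2)))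
    fun j => ?_
  have hpos : 0 < ((j : ℝ) ^ 2 + j + 3) * log 2 - log ρ := by
    have : 0 ≤ ((j : ℝ) ^ 2 + j) * log 2 := by positivity
    linarith
  calc ENNReal.ofReal ((j : ℝ) ^ 2 / (j ^ 2 + j + (3 - log ρ / log 2)))
      = ENNReal.ofReal ((j : ℝ) ^ 2 * log 2) / ENNReal.ofReal |log (ε j)| := by
        rw [hlogε, ← ENNReal.ofReal_div_of_pos hpos]
        congr 1
        field_simp
        ring
    _ ≤ dynS G (ε j) / ENNReal.ofReal |log (ε j)| := by
        gcongr
        refine le_trans (ENNReal.ofReal_le_ofReal ?_)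
          (log_le_dynS (by positivity) (exists_isDynSeparated_of_isGadgetOn hc hρ hcρ hG j))
        calc (j : ℝ) ^ 2 * log 2 = log ((2 ^ j ^ 2 : ℕ) : ℝ) := by
              rw [Nat.cast_pow, log_pow]; push_cast; ring
          _ ≤ _ := log_natCast_le_log_natCast (Nat.le_succ _)

end LowerBound

theorem exists_Icc_subset_closedBall {p ρ : ℝ} (hp : p ∈ I) (hρ : ρ ≤ 1) :
    ∃ c, 0 ≤ c ∧ c + ρ ≤ 1 ∧ Icc c (c + ρ) ⊆ closedBall p ρ := by
  refine ⟨min p (1 - ρ), le_min hp.1 (by linarith), by linarith [min_le_right p (1 - ρ)],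
    fun y hy => ?_⟩
  rw [mem_closedBall, Real.dist_eq, abs_le]
  rcases min_cases p (1 - ρ) with ⟨h, h'⟩ | ⟨h, h'⟩ <;> rw [h] at hy <;>
    constructor <;> linarith [hy.1, hy.2, hp.2]

def plateau (p ρ x : ℝ) : ℝ := projIcc 0 1 zero_le_one (2 - |x - p| / ρ)

def rescaledGadget (c ρ x : ℝ) : ℝ := c + ρ * gadget (projIcc 0 1 zero_le_one ((x - c) / ρ))

section Construction

variable {p c ρ x : ℝ}

theorem continuous_plateau : Continuous (plateau p ρ) := by
  unfold plateau; fun_prop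

theorem plateau_mem_Icc : plateau p ρ x ∈ I := (projIcc 0 1 zero_le_one _).2

theorem plateau_eq_one (hρ : 0 < ρ) (hx : |x - p| ≤ ρ) : plateau p ρ x = 1 := by
  rw [plateau, projIcc_of_right_le _ (by rw [le_sub_comm, div_le_iff₀ hρ]; linarith)]

theorem abs_sub_lt_of_plateau_ne_zero (hρ : 0 < ρ) (hx : plateau p ρ x ≠ 0) : |x - p| < 2 * ρ := by
  by_contra! h
  exact hx (by rw [plateau, projIcc_of_le_left _ (by rw [sub_nonpos, le_div_iff₀ hρ]; linarith)])

theorem continuous_rescaledGadget : Continuous (rescaledGadget c ρ) := by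
  unfold rescaledGadget
  have := continuous_gadget
  fun_prop

theorem rescaledGadget_mem_Icc (hρ : 0 < ρ) (x : ℝ) : rescaledGadget c ρ x ∈ Icc c (c + ρ) := by
  have := gadget_mem_Icc (projIcc (0:ℝ) 1 zero_le_one ((x - c) / ρ)).2
  constructor <;> unfold rescaledGadget <;> nlinarith [this.1, this.2]

theorem rescaledGadget_of_mem (hρ : 0 < ρ) (hx : x ∈ Icc c (c + ρ)) :
    rescaledGadget c ρ x = c + ρ * gadget ((x - c) / ρ) := by
  rw [rescaledGadget, projIcc_of_mem _ (div_mem (by linarith [hx.1]) hρ.le (by linarith [hx.2]))]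

end Construction

/-- `G` blends `F` with a gadget on a window of size `ρ` next to a fixed point `p` of `F`: there
`F` stays close to `p`, hence to the window. -/
theorem exists_isGadgetOn_dist_le (F : C(I, I)) {η : ℝ} (hη : 0 < η) :
    ∃ G : C(I, I), dist F G ≤ η ∧ ∃ c ρ, 0 ≤ c ∧ 0 < ρ ∧ c + ρ ≤ 1 ∧ IsGadgetOn G c ρ := by
  obtain ⟨p, -, hp⟩ := exists_mem_Icc_isFixedPt F.continuous.continuousOn
    (bot_le (a := (⊤ : I))) bot_le le_top
  obtain ⟨δ, hδ, hFδ⟩ :=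
    Metric.continuousAt_iff.1 (F.continuous.continuousAt (x := p)) (η / 2) (half_pos hη)
  set ρ := min (δ / 2) (min (η / 2) 1)
  have hρ : 0 < ρ := lt_min (half_pos hδ) (lt_min (half_pos hη) one_pos)
  have hρδ : 2 * ρ ≤ δ := by linarith [min_le_left (δ / 2) (min (η / 2) 1)]
  have hρη : ρ ≤ η / 2 := (min_le_right _ _).trans (min_le_left _ _)
  obtain ⟨c, hc, hcρ, hnear⟩ := exists_Icc_subset_closedBall p.2 ((min_le_right _ _).trans (min_le_right _ _))
  have hblend (x : I) : (F x : ℝ) + plateau p ρ x • (rescaledGadget c ρ x - F x) ∈ I :=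
    (convex_Icc 0 1).add_smul_sub_mem (F x).2 (Icc_subset_Icc hc hcρ (rescaledGadget_mem_Icc hρ x))
      plateau_mem_Icc
  let G : C(I, I) := ⟨fun x => ⟨_, hblend x⟩, by
    have := continuous_plateau (p := p) (ρ := ρ)
    have := continuous_rescaledGadget (c := c) (ρ := ρ)
    fun_prop⟩
  refine ⟨G, (ContinuousMap.dist_le hη.le).2 fun x => ?_, c, ρ, hc, hρ, hcρ, fun x hx => ?_⟩
  · rw [Subtype.dist_eq, Real.dist_eq]
    change |(F x : ℝ) - (F x + plateau p ρ x • (rescaledGadget c ρ x - F x))| ≤ η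
    rw [sub_add_cancel_left, abs_neg, smul_eq_mul, abs_mul, abs_of_nonneg plateau_mem_Icc.1]
    rcases eq_or_ne (plateau p ρ x) 0 with h0 | h0
    · simp [h0, hη.le]
    have hF : |(F x : ℝ) - p| < η / 2 := by
      have hxp : dist x p < δ := by
        rw [Subtype.dist_eq, Real.dist_eq]
        linarith [abs_sub_lt_of_plateau_ne_zero hρ h0]
      simpa only [hp.eq, Subtype.dist_eq, Real.dist_eq] using hFδ hxp
    have hH : |rescaledGadget c ρ x - p| ≤ ρ := hnear (rescaledGadget_mem_Icc hρ x)
    calc plateau p ρ x * |rescaledGadget c ρ x - F x|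
        ≤ 1 * (|rescaledGadget c ρ x - p| + |(p : ℝ) - F x|) :=
          mul_le_mul plateau_mem_Icc.2 (abs_sub_le _ _ _) (abs_nonneg _) zero_le_one
      _ ≤ η := by rw [abs_sub_comm (p : ℝ)]; linarith
  · show (F x : ℝ) + plateau p ρ x • (rescaledGadget c ρ x - F x) = _
    rw [plateau_eq_one hρ (hnear hx), one_smul, add_sub_cancel, rescaledGadget_of_mem hρ hx]

end

/-- **Proposition 5.4**: the set of continuous self-maps of `[0,1]` with upper metric mean
dimension equal to `1` is dense in `C([0,1])` with the uniform topology. -/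
theorem dense_mdim_eq_one :
    Dense {F : C((Set.Icc (0:ℝ) 1), (Set.Icc (0:ℝ) 1)) | mdim (⇑F) = 1} := by
  refine Metric.dense_iff.2 fun F η hη => ?_
  obtain ⟨G, hFG, c, ρ, hc, hρ, hcρ, hG⟩ := exists_isGadgetOn_dist_le F (half_pos hη)
  exact ⟨G, by rw [mem_ball, dist_comm]; linarith,
    le_antisymm (mdim_le_one G) (one_le_mdim_of_isGadgetOn hc hρ hcρ hG)⟩
end

section
/- Let (X,d) be a compact metric space and T:X→X a continuous map. Then the upper metric mean dimension is bounded by the upper box dimension of the space: mdim(X,d,T) ≤ dim_B(X,d). -/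
open Filter Set Metric Function
open scoped ENNReal NNReal

/-! An `(n, ε)`-separated set injects into `Fⁿ`, where `F` is a maximal `ε/2`-separated set,
hence an `ε/2`-net: send `x` to net points nearest to `x, T x, …, T^(n-1) x`. Thus
`N_d(n, ε) ≤ N(ε/2)ⁿ` and `S(X, d, ε) ≤ log N(ε/2)`. Since `|log (ε/2)| / |log ε| → 1` as `ε → 0`,
dividing by `|log ε|` and passing to the `limsup` gives `mdim(X, d, T) ≤ dim_B(X, d)`. -/

open Topology

lemma IsCompact.packingNumber_ne_top {X : Type*} [PseudoEMetricSpace X] {A : Set X}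
    (hA : IsCompact A) {ε : ℝ≥0} (hε : ε ≠ 0) : packingNumber ε A ≠ ⊤ := by
  obtain ⟨C, -, hC, hCA⟩ := exists_finite_isCover_of_isCompact (half_pos hε.bot_lt).ne' hA
  refine ne_top_of_le_ne_top (Set.encard_ne_top_iff.2 hC) ?_
  calc packingNumber ε A = packingNumber (2 * (ε / 2)) A := by rw [mul_div_cancel₀ _ two_ne_zero]
    _ ≤ externalCoveringNumber (ε / 2) A := packingNumber_two_mul_le_externalCoveringNumber _ _
    _ ≤ C.encard := hCA.externalCoveringNumber_le_encard

section Separated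

variable {X : Type*} [MetricSpace X]

lemma ofReal_lt_edist_iff {x y : X} {r : ℝ} (hr : 0 ≤ r) :
    ENNReal.ofReal r < edist x y ↔ r < dist x y := by
  rw [← not_le, edist_le_ofReal hr, not_le]

lemma isSeparated_ofReal_iff {r : ℝ} (hr : 0 ≤ r) {E : Set X} :
    IsSeparated (ENNReal.ofReal r) E ↔ E.Pairwise fun x y => r < dist x y := by
  simp only [IsSeparated, ofReal_lt_edist_iff hr]

variable [CompactSpace X] {r : ℝ}

lemma card_le_sepNum (hr : 0 < r) {E : Finset X}
    (hE : ∀ x ∈ E, ∀ y ∈ E, x ≠ y → r < dist x y) : E.card ≤ sepNum X r := by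
  have hfin : packingNumber r.toNNReal (univ : Set X) ≠ ⊤ :=
    isCompact_univ.packingNumber_ne_top (by simpa using hr)
  lift packingNumber r.toNNReal (univ : Set X) to ℕ using hfin with N hN
  refine le_csSup ⟨N, ?_⟩ ⟨E, hE, rfl⟩
  rintro _ ⟨F, hF, rfl⟩
  have hFsep : IsSeparated (ENNReal.ofReal r) (F : Set X) :=
    (isSeparated_ofReal_iff hr.le).2 fun x hx y hy => hF x hx y hy
  exact_mod_cast hN ▸ hFsep.encard_le_packingNumber (subset_univ _)

lemma exists_finset_card_le_sepNum_forall_dist_le (hr : 0 < r) :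
    ∃ F : Finset X, F.card ≤ sepNum X r ∧ ∀ x, ∃ f ∈ F, dist x f ≤ r := by
  have hfin : packingNumber r.toNNReal (univ : Set X) ≠ ⊤ :=
    isCompact_univ.packingNumber_ne_top (by simpa using hr)
  set C := maximalSeparatedSet r.toNNReal (univ : Set X)
  have hC : C.Finite := Set.encard_ne_top_iff.1 (encard_maximalSeparatedSet hfin ▸ hfin)
  have hCsep : C.Pairwise fun x y => r < dist x y :=
    (isSeparated_ofReal_iff hr.le).1 isSeparated_maximalSeparatedSet
  refine ⟨hC.toFinset, card_le_sepNum hr fun x hx y hy => ?_, fun x => ?_⟩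
  · exact hCsep (hC.mem_toFinset.1 hx) (hC.mem_toFinset.1 hy)
  · obtain ⟨f, hf, hxf⟩ := isCover_maximalSeparatedSet hfin (mem_univ x)
    exact ⟨f, hC.mem_toFinset.2 hf, (edist_le_ofReal hr.le).1 hxf⟩

end Separated

section Dynamical

variable {X : Type*} [MetricSpace X] (T : X → X)

lemma dynDist_le_of_forall_dist_le {n : ℕ} {x y : X} {r : ℝ} (hr : 0 ≤ r)
    (h : ∀ k < n, dist (T^[k] x) (T^[k] y) ≤ r) : dynDist T n x y ≤ r := by
  lift r to ℝ≥0 using hr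
  refine NNReal.coe_le_coe.2 (Finset.sup_le fun k hk => ?_)
  rw [← NNReal.coe_le_coe, coe_nndist]
  exact h k (Finset.mem_range.1 hk)

lemma dynSepNum_le_card_pow {ε : ℝ} {F : Finset X} (hF : ∀ x, ∃ f ∈ F, dist x f ≤ ε / 2)
    (n : ℕ) : dynSepNum T n ε ≤ F.card ^ n := by
  choose p hpF hp using hF
  refine csSup_le ⟨0, ∅, by simp, rfl⟩ ?_
  rintro _ ⟨E, hE, rfl⟩
  let code : X → Fin n → X := fun x k => p (T^[k] x)
  have hmaps : ∀ x ∈ E, code x ∈ Fintype.piFinset fun _ => F :=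
    fun x _ => Fintype.mem_piFinset.2 fun k => hpF _
  have hinj : Set.InjOn code E := by
    intro x hx y hy hxy
    by_contra hne
    have hε : 0 ≤ ε := by linarith [dist_nonneg.trans (hp x)]
    refine (hE x hx y hy hne).not_ge (dynDist_le_of_forall_dist_le T hε fun k hk => ?_)
    have hcode : p (T^[k] x) = p (T^[k] y) := congrFun hxy ⟨k, hk⟩
    calc dist (T^[k] x) (T^[k] y)
        ≤ dist (T^[k] x) (p (T^[k] x)) + dist (T^[k] y) (p (T^[k] y)) :=
          hcode ▸ dist_triangle_right _ _ _
      _ ≤ ε / 2 + ε / 2 := add_le_add (hp _) (hp _)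
      _ = ε := add_halves ε
  simpa using Finset.card_le_card_of_injOn code hmaps hinj

end Dynamical

lemma limsup_log_div_le_log_of_le_pow {a : ℕ → ℕ} {M : ℕ} (h : ∀ n, a n ≤ M ^ n) :
    limsup (fun n : ℕ => ENNReal.ofReal (Real.log (a n)) / (n : ℝ≥0∞)) atTop ≤
      ENNReal.ofReal (Real.log M) := by
  refine limsup_le_of_le (by isBoundedDefault) ?_
  filter_upwards [eventually_ne_atTop 0] with n hn
  rw [ENNReal.div_le_iff (by simpa) (ENNReal.natCast_ne_top n)]
  rcases (a n).eq_zero_or_pos with h0 | hpos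
  · simp [h0]
  calc ENNReal.ofReal (Real.log (a n)) ≤ ENNReal.ofReal (Real.log ((M : ℝ) ^ n)) :=
        ENNReal.ofReal_le_ofReal (Real.log_le_log (by exact_mod_cast hpos) (by exact_mod_cast h n))
    _ = ENNReal.ofReal (Real.log M) * n := by
        rw [Real.log_pow, ENNReal.ofReal_mul n.cast_nonneg, ENNReal.ofReal_natCast, mul_comm]

lemma dynS_le_log_sepNum {X : Type*} [MetricSpace X] [CompactSpace X] (T : X → X) {ε : ℝ}
    (hε : 0 < ε) : dynS T ε ≤ ENNReal.ofReal (Real.log (sepNum X (ε / 2))) := by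
  obtain ⟨F, hFcard, hF⟩ := exists_finset_card_le_sepNum_forall_dist_le (X := X) (half_pos hε)
  exact limsup_log_div_le_log_of_le_pow fun n =>
    (dynSepNum_le_card_pow T hF n).trans (Nat.pow_le_pow_left hFcard n)

lemma tendsto_div_const_nhdsGT_zero {c : ℝ} (hc : 0 < c) :
    Tendsto (fun ε : ℝ => ε / c) (𝓝[>] 0) (𝓝[>] 0) := by
  refine tendsto_nhdsWithin_iff.2 ⟨?_, ?_⟩
  · exact ((continuous_id.div_const c).tendsto' 0 0 (zero_div c)).mono_left nhdsWithin_le_nhds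
  · filter_upwards [self_mem_nhdsWithin] with ε (hε : 0 < ε) using div_pos hε hc

lemma tendsto_abs_log_div_const_div_abs_log {c : ℝ} (hc : 0 < c) :
    Tendsto (fun ε => |Real.log (ε / c)| / |Real.log ε|) (𝓝[>] 0) (𝓝 1) := by
  have hinv : Tendsto (fun ε => (Real.log ε)⁻¹) (𝓝[>] 0) (𝓝 0) :=
    tendsto_inv_atBot_zero.comp Real.tendsto_log_nhdsGT_zero
  have hlim := ((tendsto_const_nhds (x := (1 : ℝ))).sub (hinv.const_mul (Real.log c))).abs
  rw [mul_zero, sub_zero, abs_one] at hlim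
  refine hlim.congr' ?_
  filter_upwards [self_mem_nhdsWithin, Ioo_mem_nhdsGT (zero_lt_one' ℝ)]
    with ε (hε : 0 < ε) hε1
  have hlog : Real.log ε ≠ 0 := (Real.log_neg hε hε1.2).ne
  rw [← abs_div, Real.log_div hε.ne' hc.ne', sub_div, div_self hlog, div_eq_mul_inv]

lemma limsup_comp_div_const_div_abs_log_le (f : ℝ → ℝ≥0∞) {c : ℝ} (hc : 0 < c) :
    limsup (fun ε => f (ε / c) / ENNReal.ofReal |Real.log ε|) (𝓝[>] 0) ≤
      limsup (fun ε => f ε / ENNReal.ofReal |Real.log ε|) (𝓝[>] 0) := by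
  set g := fun ε => f ε / ENNReal.ofReal |Real.log ε|
  set ratio := fun ε => ENNReal.ofReal |Real.log (ε / c)| / ENNReal.ofReal |Real.log ε|
  have hsmall : ∀ᶠ ε in 𝓝[>] (0 : ℝ), ε ∈ Ioo 0 1 := Ioo_mem_nhdsGT (zero_lt_one' ℝ)
  have hratio : Tendsto ratio (𝓝[>] 0) (𝓝 1) := by
    have := ENNReal.tendsto_ofReal (tendsto_abs_log_div_const_div_abs_log hc)
    rw [ENNReal.ofReal_one] at this
    refine this.congr' ?_
    filter_upwards [hsmall] with ε hε
    exact ENNReal.ofReal_div_of_pos (abs_pos.2 (Real.log_neg hε.1 hε.2).ne)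
  have hfactor : (fun ε => f (ε / c) / ENNReal.ofReal |Real.log ε|) =ᶠ[𝓝[>] 0]
      (g ∘ fun ε => ε / c) * ratio := by
    filter_upwards [(tendsto_div_const_nhdsGT_zero hc).eventually hsmall] with ε hε
    have hlog : ENNReal.ofReal |Real.log (ε / c)| ≠ 0 := by
      simpa using (Real.log_neg hε.1 hε.2).ne
    simp only [g, ratio, Function.comp_apply, Pi.mul_apply]
    rw [← mul_div_assoc, ENNReal.div_mul_cancel hlog ENNReal.ofReal_ne_top]
  calc limsup (fun ε => f (ε / c) / ENNReal.ofReal |Real.log ε|) (𝓝[>] 0)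
      = limsup ((g ∘ fun ε => ε / c) * ratio) (𝓝[>] 0) := limsup_congr hfactor
    _ ≤ limsup (g ∘ fun ε => ε / c) (𝓝[>] 0) * limsup ratio (𝓝[>] 0) :=
        ENNReal.limsup_mul_le' (by simp [hratio.limsup_eq]) (by simp [hratio.limsup_eq])
    _ = limsup g (map (fun ε => ε / c) (𝓝[>] 0)) := by
        rw [hratio.limsup_eq, mul_one, limsup_comp]
    _ ≤ limsup g (𝓝[>] 0) := limsup_le_limsup_of_le (tendsto_div_const_nhdsGT_zero hc)

theorem mdim_le_upperBoxDim_general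
    {X : Type u} [MetricSpace X] [CompactSpace X] (T : X → X) :
    mdim T ≤ upperBoxDim X := by
  calc mdim T
      ≤ limsup (fun ε => ENNReal.ofReal (Real.log (sepNum X (ε / 2))) /
          ENNReal.ofReal |Real.log ε|) (𝓝[>] 0) := by
        refine limsup_le_limsup ?_ (by isBoundedDefault) (by isBoundedDefault)
        filter_upwards [self_mem_nhdsWithin] with ε (hε : 0 < ε)
        exact ENNReal.div_le_div_right (dynS_le_log_sepNum T hε) _
    _ ≤ upperBoxDim X :=
        limsup_comp_div_const_div_abs_log_le (fun r => ENNReal.ofReal (Real.log (sepNum X r)))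
          two_pos

/-- **Remark 5.1**: for a continuous map of a compact metric space, the upper metric mean
dimension is bounded above by the upper box dimension of the space. -/
theorem mdim_le_upperBoxDim
    {X : Type u} [MetricSpace X] [CompactSpace X] (T : X → X) (hT : Continuous T) :
    mdim T ≤ upperBoxDim X :=
  mdim_le_upperBoxDim_general T
end
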